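/- arXiv:2109.11198 — 3 statements merged into one kernel-verified Lean document; each statement's English description precedes it below -/
import Mathlib

section
/- Let G be a finite group and π a set of primes with O_π(G) ≠ 1. Consider chains C : 1 = P₀ < P₁ < … < Pₙ of π-subgroups of G (with n = 0 allowed), with length |C| = n and stabilizer G_C = ⋂ᵢ N_G(Pᵢ). Then there is an involution C ↦ C* on the set of all such chains with no fixed points, satisfying |C*| = |C| ± 1 and G_{C*} = G_C for every chain C. -/
/-- `n` is a π-number: all prime divisors lie in π. -/
def IsPiNumber (π : Set ℕ) (n : ℕ) : Prop := ∀ p : ℕ, p.Prime → p ∣ n → p ∈ π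

/-- A π-subgroup: a subgroup whose order is a π-number. -/
def IsPiSubgroup (π : Set ℕ) {G : Type*} [Group G] (P : Subgroup G) : Prop :=
  IsPiNumber π (Nat.card P)

/-- A chain 1 = P₀ < P₁ < … < Pₙ of π-subgroups of `G`, encoded by its (totally
ordered, hence strictly increasing) finite set of members, which contains ⊥. -/
structure PiChain (π : Set ℕ) (G : Type*) [Group G] where
  carrier : Finset (Subgroup G)
  bot_mem : ⊥ ∈ carrier
  isChain : IsChain (· ≤ ·) (carrier : Set (Subgroup G))
  pi : ∀ P ∈ carrier, IsPiSubgroup π P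

/-- The length |C| = n of a chain 1 = P₀ < … < Pₙ. -/
def PiChain.len {π : Set ℕ} {G : Type*} [Group G] (C : PiChain π G) : ℕ :=
  C.carrier.card - 1

/-- The stabilizer G_C = ⋂ᵢ N_G(Pᵢ) of a chain. -/
def PiChain.stab {π : Set ℕ} {G : Type*} [Group G] (C : PiChain π G) : Subgroup G :=
  ⨅ P ∈ C.carrier, Subgroup.normalizer P

instance {π : Set ℕ} {G : Type*} [Group G] [Finite G] : Finite (PiChain π G) := by
  have : Fintype G := Fintype.ofFinite G
  classical
  apply Finite.of_injective (fun C : PiChain π G => C.carrier)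
  intro C D h
  cases C; cases D; simpa using h

/-- O_π(G): the largest normal π-subgroup of `G`. -/
def piCore (π : Set ℕ) (G : Type*) [Group G] : Subgroup G :=
  ⨆ P ∈ {P : Subgroup G | P.Normal ∧ IsPiSubgroup π P}, P

/-!
Let O = O_π(G) ≠ 1. For a chain C let B be its largest member not containing O. Since O is a
normal π-subgroup, BO is a π-subgroup; it contains every member of C not containing O and is
contained in every member containing O, so toggling BO in C (adding it if absent, removing it
if present) gives a chain C*. The largest member of C* not containing O is again B, so
C ↦ C* is an involution, and it changes the length by one. Finally B lies in both C and C*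
and N(B) ≤ N(BO), so the member BO does not affect the stabilizer.
-/

open scoped symmDiff

theorem IsPiNumber.of_dvd {π : Set ℕ} {m n : ℕ} (hn : IsPiNumber π n) (hmn : m ∣ n) :
    IsPiNumber π m :=
  fun p hp hpm => hn p hp (hpm.trans hmn)

theorem IsPiNumber.mul {π : Set ℕ} {m n : ℕ} (hm : IsPiNumber π m) (hn : IsPiNumber π n) :
    IsPiNumber π (m * n) :=
  fun p hp hpmn => (hp.dvd_mul.mp hpmn).elim (hm p hp) (hn p hp)

theorem isPiNumber_one (π : Set ℕ) : IsPiNumber π 1 :=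
  fun _ hp hp1 => absurd (Nat.eq_one_of_dvd_one hp1) hp.ne_one

section PiSubgroup

variable {π : Set ℕ} {G : Type*} [Group G]

theorem Subgroup.card_sup_normal (H N : Subgroup G) [N.Normal] :
    Nat.card (H ⊔ N : Subgroup G) = Nat.card N * N.relIndex H := by
  rw [← relIndex_bot_left, ← relIndex_mul_relIndex ⊥ N _ bot_le le_sup_right,
    relIndex_sup_right, relIndex_bot_left]

theorem IsPiSubgroup.sup_normal {H N : Subgroup G} [N.Normal] (hH : IsPiSubgroup π H)
    (hN : IsPiSubgroup π N) : IsPiSubgroup π (H ⊔ N) := by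
  rw [IsPiSubgroup, Subgroup.card_sup_normal]
  exact hN.mul (hH.of_dvd (Subgroup.relIndex_dvd_card N H))

theorem isPiSubgroup_bot : IsPiSubgroup π (⊥ : Subgroup G) := by
  rw [IsPiSubgroup, Subgroup.card_bot]
  exact isPiNumber_one π

theorem piCore_normal_and_isPiSubgroup [Finite G] :
    (piCore π G).Normal ∧ IsPiSubgroup π (piCore π G) := by
  set S := {P : Subgroup G | P.Normal ∧ IsPiSubgroup π P}
  have hS : (Set.toFinite S).toFinset.sup id ∈ S :=
    Finset.sup_mem S ⟨inferInstance, isPiSubgroup_bot⟩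
      (fun H ⟨_, hH⟩ N ⟨_, hN⟩ => ⟨Subgroup.sup_normal H N, hH.sup_normal hN⟩) _ _
      (fun P hP => (Set.Finite.mem_toFinset _).mp hP)
  rwa [Finset.sup_id_eq_sSup, Set.Finite.coe_toFinset, sSup_eq_iSup] at hS

end PiSubgroup

theorem IsChain.sup_mem {α : Type*} [SemilatticeSup α] {s : Set α} (hs : IsChain (· ≤ ·) s)
    {x y : α} (hx : x ∈ s) (hy : y ∈ s) : x ⊔ y ∈ s := by
  rcases hs.total hx hy with h | h
  · rwa [sup_of_le_right h]
  · rwa [sup_of_le_left h]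

namespace Finset

section SymmDiff

variable {α : Type*} [DecidableEq α]

theorem symmDiff_singleton_of_mem {s : Finset α} {t : α} (ht : t ∈ s) :
    s ∆ {t} = s.erase t := by
  ext x
  by_cases hx : x = t <;> simp [mem_symmDiff, hx, ht]

theorem symmDiff_singleton_of_notMem {s : Finset α} {t : α} (ht : t ∉ s) :
    s ∆ {t} = insert t s := by
  ext x
  by_cases hx : x = t <;> simp [mem_symmDiff, hx, ht]

theorem card_symmDiff_singleton (s : Finset α) (t : α) :
    #(s ∆ {t}) = #s + 1 ∨ #s = #(s ∆ {t}) + 1 := by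
  by_cases ht : t ∈ s
  · rw [symmDiff_singleton_of_mem ht]
    exact Or.inr (card_erase_add_one ht).symm
  · rw [symmDiff_singleton_of_notMem ht]
    exact Or.inl (card_insert_of_notMem ht)

theorem iInf_symmDiff_singleton {β : Type*} [CompleteLattice β] (f : α → β) {s : Finset α}
    {b t : α} (hb : b ∈ s) (hbt : b ≠ t) (hf : f b ≤ f t) :
    ⨅ x ∈ s ∆ {t}, f x = ⨅ x ∈ s, f x := by
  have insert_eq : ∀ u : Finset α, b ∈ u → ⨅ x ∈ insert t u, f x = ⨅ x ∈ u, f x :=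
    fun u hu => by rw [iInf_insert, inf_eq_right.mpr ((iInf₂_le b hu).trans hf)]
  by_cases ht : t ∈ s
  · rw [symmDiff_singleton_of_mem ht, ← insert_eq _ (mem_erase.mpr ⟨hbt, hb⟩),
      insert_erase ht]
  · rw [symmDiff_singleton_of_notMem ht, insert_eq _ hb]

end SymmDiff

variable {α : Type*} [Lattice α] [OrderBot α] [DecidableLE α]

def supNotAbove (s : Finset α) (a : α) : α := {x ∈ s | ¬ a ≤ x}.sup id

variable {s : Finset α} {a : α}

theorem le_supNotAbove {x : α} (hx : x ∈ s) (hax : ¬ a ≤ x) : x ≤ s.supNotAbove a :=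
  le_sup (f := id) (mem_filter.mpr ⟨hx, hax⟩)

theorem supNotAbove_mem_filter (hs : IsChain (· ≤ ·) (s : Set α)) (hbot : ⊥ ∈ s) (ha : a ≠ ⊥) :
    s.supNotAbove a ∈ {x ∈ s | ¬ a ≤ x} := by
  let t : Finset α := {x ∈ s | ¬ a ≤ x}
  have hbot' : ⊥ ∈ t := mem_filter.mpr ⟨hbot, fun h => ha (le_bot_iff.mp h)⟩
  exact sup_mem (t : Set α) hbot'
    (fun _ hx _ hy => (hs.mono (coe_subset.mpr (filter_subset _ s))).sup_mem hx hy)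
    t id (fun _ hx => hx)

theorem supNotAbove_le (hs : IsChain (· ≤ ·) (s : Set α)) (hbot : ⊥ ∈ s) (ha : a ≠ ⊥)
    {x : α} (hx : x ∈ s) (hax : a ≤ x) : s.supNotAbove a ≤ x := by
  obtain ⟨hmem, hnot⟩ := mem_filter.mp (supNotAbove_mem_filter hs hbot ha)
  exact (hs.total hmem hx).resolve_right fun h => hnot (hax.trans h)

variable [DecidableEq α]

def chainToggle (s : Finset α) (a : α) : Finset α := s ∆ {s.supNotAbove a ⊔ a}

theorem supNotAbove_symmDiff_singleton {t : α} (hat : a ≤ t) :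
    (s ∆ {t}).supNotAbove a = s.supNotAbove a := by
  have : {x ∈ s ∆ {t} | ¬ a ≤ x} = {x ∈ s | ¬ a ≤ x} := by
    ext x
    by_cases hx : x = t
    · subst hx; simp [hat]
    · simp [mem_symmDiff, hx]
  rw [supNotAbove, supNotAbove, this]

theorem chainToggle_chainToggle (s : Finset α) (a : α) :
    (s.chainToggle a).chainToggle a = s := by
  rw [chainToggle, chainToggle, supNotAbove_symmDiff_singleton le_sup_right,
    symmDiff_symmDiff_cancel_right]

theorem chainToggle_ne (s : Finset α) (a : α) : s.chainToggle a ≠ s := by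
  rw [chainToggle, Ne, symmDiff_eq_left]
  exact singleton_ne_empty _

theorem bot_mem_chainToggle (hbot : ⊥ ∈ s) (ha : a ≠ ⊥) : ⊥ ∈ s.chainToggle a := by
  have : (⊥ : α) ≠ s.supNotAbove a ⊔ a := fun h => ha (le_bot_iff.mp (h ▸ le_sup_right))
  simp [chainToggle, mem_symmDiff, hbot, this]

theorem isChain_chainToggle (hs : IsChain (· ≤ ·) (s : Set α)) (hbot : ⊥ ∈ s) (ha : a ≠ ⊥) :
    IsChain (· ≤ ·) (s.chainToggle a : Set α) := by
  rw [chainToggle]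
  by_cases ht : s.supNotAbove a ⊔ a ∈ s
  · rw [symmDiff_singleton_of_mem ht, coe_erase]
    exact hs.mono Set.sdiff_subset
  · rw [symmDiff_singleton_of_notMem ht, coe_insert]
    refine hs.insert fun x hx _ => ?_
    by_cases hax : a ≤ x
    · exact Or.inl (sup_le (supNotAbove_le hs hbot ha hx hax) hax)
    · exact Or.inr ((le_supNotAbove hx hax).trans le_sup_left)

end Finset

namespace PiChain

variable {π : Set ℕ} {G : Type*} [Group G]

theorem ext_carrier {C D : PiChain π G} (h : C.carrier = D.carrier) : C = D := by
  cases C; cases D; cases h; rfl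

variable {O : Subgroup G} (hO : O ≠ ⊥) [O.Normal] (hOpi : IsPiSubgroup π O)

open Classical in
noncomputable def toggle (C : PiChain π G) : PiChain π G where
  carrier := C.carrier.chainToggle O
  bot_mem := Finset.bot_mem_chainToggle C.bot_mem hO
  isChain := Finset.isChain_chainToggle C.isChain C.bot_mem hO
  pi P hP := by
    rcases Finset.mem_symmDiff.mp hP with ⟨hPC, -⟩ | ⟨hPt, -⟩
    · exact C.pi P hPC
    · rw [Finset.mem_singleton.mp hPt]
      exact (C.pi _ (Finset.mem_filter.mp
        (Finset.supNotAbove_mem_filter C.isChain C.bot_mem hO)).1).sup_normal hOpi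

open Classical in
theorem carrier_toggle (C : PiChain π G) :
    (toggle hO hOpi C).carrier = C.carrier.chainToggle O :=
  rfl

theorem toggle_toggle (C : PiChain π G) : toggle hO hOpi (toggle hO hOpi C) = C := by
  classical
  exact ext_carrier (by rw [carrier_toggle, carrier_toggle, Finset.chainToggle_chainToggle])

theorem toggle_ne (C : PiChain π G) : toggle hO hOpi C ≠ C := by
  classical
  intro h
  exact Finset.chainToggle_ne C.carrier O (carrier_toggle hO hOpi C ▸ congrArg carrier h)

theorem len_toggle (C : PiChain π G) :
    (toggle hO hOpi C).len = C.len + 1 ∨ C.len = (toggle hO hOpi C).len + 1 := by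
  classical
  have hC : 0 < C.carrier.card := Finset.card_pos.mpr ⟨⊥, C.bot_mem⟩
  have hC' : 0 < (toggle hO hOpi C).carrier.card :=
    Finset.card_pos.mpr ⟨⊥, (toggle hO hOpi C).bot_mem⟩
  have := Finset.card_symmDiff_singleton C.carrier (C.carrier.supNotAbove O ⊔ O)
  rw [carrier_toggle, Finset.chainToggle] at hC'
  rw [len, len, carrier_toggle, Finset.chainToggle]
  omega

theorem stab_toggle (C : PiChain π G) : (toggle hO hOpi C).stab = C.stab := by
  classical
  obtain ⟨hB, hOB⟩ := Finset.mem_filter.mp (Finset.supNotAbove_mem_filter C.isChain C.bot_mem hO)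
  rw [stab, stab, carrier_toggle, Finset.chainToggle]
  exact Finset.iInf_symmDiff_singleton (fun P : Subgroup G => Subgroup.normalizer (P : Set G)) hB
    (fun h => hOB (h ▸ le_sup_right)) Subgroup.normalizer_le_normalizer_sup_normal

end PiChain

theorem chain_involution_general (π : Set ℕ)
    (G : Type*) [Group G] [Finite G] (h : piCore π G ≠ ⊥) :
    ∃ σ : PiChain π G → PiChain π G,
      (∀ C, σ (σ C) = C) ∧ (∀ C, σ C ≠ C) ∧
      (∀ C, (σ C).len = C.len + 1 ∨ C.len = (σ C).len + 1) ∧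
      (∀ C, (σ C).stab = C.stab) := by
  obtain ⟨_, hOpi⟩ := piCore_normal_and_isPiSubgroup (π := π) (G := G)
  exact ⟨PiChain.toggle h hOpi, PiChain.toggle_toggle h hOpi, PiChain.toggle_ne h hOpi,
    PiChain.len_toggle h hOpi, PiChain.stab_toggle h hOpi⟩

/-- If O_π(G) ≠ 1, there is a fixed-point-free involution C ↦ C* on the chains
of π-subgroups of G with |C*| = |C| ± 1 and G_{C*} = G_C. -/
theorem chain_involution (π : Set ℕ) (hπ : ∀ p ∈ π, p.Prime)
    (G : Type*) [Group G] [Finite G] (h : piCore π G ≠ ⊥) :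
    ∃ σ : PiChain π G → PiChain π G,
      (∀ C, σ (σ C) = C) ∧ (∀ C, σ C ≠ C) ∧
      (∀ C, (σ C).len = C.len + 1 ∨ C.len = (σ C).len + 1) ∧
      (∀ C, (σ C).stab = C.stab) :=
  chain_involution_general π G h
end

section
/- Let G be a finite group with a normal π'-subgroup K. Then every chain of π-subgroups of G/K is the image of a chain of π-subgroups of G under the map sending 1 = P₀ < … < Pₙ to P₀K/K < … < PₙK/K (i.e., the reduction map on chains is surjective). -/
/-!
Let `T` be the top member of a chain in `G ⧸ K` and `L ≤ G` its preimage. Since `K` is a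
π'-group and `L ⧸ K ≅ T` is a π-group, Schur–Zassenhaus gives a complement `H` of `K` in `L`,
which the quotient map sends isomorphically onto `T`. Then `Q ↦ H ⊓ comap Q` lifts every member
`Q` of the chain to a π-subgroup isomorphic to `Q`, and is monotone and injective on the chain.
-/

theorem IsPiNumber.coprime_of_compl {π : Set ℕ} {m n : ℕ} (hm : IsPiNumber πᶜ m)
    (hn : IsPiNumber π n) : m.Coprime n :=
  Nat.coprime_of_dvd fun p hp hpm hpn => hm p hp hpm (hn p hp hpn)

theorem Finset.exists_greatest_of_isChain {α : Type*} [PartialOrder α] {s : Finset α}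
    (hs : IsChain (· ≤ ·) (s : Set α)) (hne : s.Nonempty) : ∃ T ∈ s, ∀ Q ∈ s, Q ≤ T := by
  obtain ⟨T, hT⟩ := Finset.exists_maximal hne
  refine ⟨T, hT.prop, fun Q hQ => ?_⟩
  rcases hs.total hQ hT.prop with h | h
  · exact h
  · exact hT.le_of_ge hQ h

namespace Subgroup

variable {G G' : Type*} [Group G] [Group G'] (f : G →* G')

theorem map_inf_comap_of_le_map {H : Subgroup G} {Q : Subgroup G'} (hQ : Q ≤ H.map f) :
    (H ⊓ Q.comap f).map f = Q := by
  refine le_antisymm ((map_mono inf_le_right).trans (map_comap_le f Q)) fun q hq => ?_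
  obtain ⟨h, hH, rfl⟩ := hQ hq
  exact ⟨h, ⟨hH, hq⟩, rfl⟩

theorem card_map_of_disjoint_ker {S : Subgroup G} (hS : Disjoint S f.ker) :
    Nat.card (S.map f) = Nat.card S := by
  have hinj : Set.InjOn f S := (Set.injOn_iff_map_eq_one f S).2 fun a ha hfa =>
    disjoint_def.1 hS ha hfa
  have := Nat.card_image_of_injOn hinj
  rwa [← coe_map] at this

theorem exists_disjoint_ker_map_eq_range (hf : (Nat.card f.ker).Coprime (Nat.card f.range)) :
    ∃ H : Subgroup G, Disjoint H f.ker ∧ H.map f = f.range := by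
  rw [← index_ker] at hf
  obtain ⟨H, hH⟩ := exists_right_complement'_of_coprime hf
  refine ⟨H, hH.disjoint.symm, ?_⟩
  rw [MonoidHom.range_eq_map, ← hH.sup_eq_top, map_sup, (map_eq_bot_iff _).2 le_rfl, bot_sup_eq]

theorem exists_disjoint_ker_map_eq_of_coprime {T : Subgroup G'} (hT : T ≤ f.range)
    (hcop : (Nat.card f.ker).Coprime (Nat.card T)) :
    ∃ H : Subgroup G, Disjoint H f.ker ∧ H.map f = T := by
  set L := T.comap f
  set φ := f.comp L.subtype
  have hrange : φ.range = T := by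
    rw [MonoidHom.range_comp, range_subtype, map_comap_eq, inf_eq_right.2 hT]
  have hker : φ.ker = f.ker.subgroupOf L := (MonoidHom.comap_ker _ _).symm
  have hcard : Nat.card φ.ker = Nat.card f.ker := by
    rw [hker]
    exact Nat.card_congr (subgroupOfEquivOfLe (MonoidHom.ker_le_comap f T)).toEquiv
  obtain ⟨H, hdisj, hmap⟩ := exists_disjoint_ker_map_eq_range φ (by rwa [hcard, hrange])
  refine ⟨H.map L.subtype, ?_, by rw [map_map, hmap, hrange]⟩
  rw [disjoint_def]
  rintro _ ⟨x, hxH, rfl⟩ hfx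
  rw [disjoint_def.1 hdisj hxH hfx, map_one]

end Subgroup

namespace PiChain

variable {π : Set ℕ} {G G' : Type*} [Group G] [Group G']

theorem exists_map_eq (f : G →* G') (D : PiChain π G') {H : Subgroup G}
    (hH : Disjoint H f.ker) (hD : ∀ Q ∈ D.carrier, Q ≤ H.map f) :
    ∃ C : PiChain π G, (D.carrier : Set (Subgroup G')) =
      (fun P => P.map f) '' (C.carrier : Set (Subgroup G)) ∧ C.len = D.len := by
  classical
  set lift : Subgroup G' → Subgroup G := fun Q => H ⊓ Q.comap f
  have map_lift : ∀ Q ∈ D.carrier, (lift Q).map f = Q := fun Q hQ =>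
    Subgroup.map_inf_comap_of_le_map f (hD Q hQ)
  have card_lift : ∀ Q ∈ D.carrier, Nat.card (lift Q) = Nat.card Q := fun Q hQ => by
    have hdisj : Disjoint (lift Q) f.ker := hH.mono_left inf_le_left
    have := Subgroup.card_map_of_disjoint_ker f hdisj
    rwa [map_lift Q hQ, eq_comm] at this
  have lift_bot : lift ⊥ = ⊥ := by
    simp only [lift, MonoidHom.comap_bot, hH.eq_bot]
  have lift_injOn : Set.InjOn lift D.carrier := fun a ha b hb hab => by
    rw [← map_lift a ha, ← map_lift b hb, hab]
  refine ⟨⟨D.carrier.image lift, lift_bot ▸ Finset.mem_image_of_mem lift D.bot_mem, ?_, ?_⟩, ?_,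
    congrArg (· - 1) (Finset.card_image_of_injOn lift_injOn)⟩
  · rw [Finset.coe_image]
    exact D.isChain.image_of_map_rel _ _ lift fun _ _ h => inf_le_inf_left _ (Subgroup.comap_mono h)
  · simp only [Finset.mem_image]
    rintro _ ⟨Q, hQ, rfl⟩
    rw [IsPiSubgroup, card_lift Q hQ]
    exact D.pi Q hQ
  · rw [Finset.coe_image, Set.image_image, Set.image_congr map_lift, Set.image_id']

end PiChain

theorem chain_reduction_surjective_general (π : Set ℕ)
    (G : Type*) [Group G] (K : Subgroup G) [K.Normal]
    (hK : IsPiSubgroup πᶜ K) :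
    ∀ D : PiChain π (G ⧸ K), ∃ C : PiChain π G,
      (D.carrier : Set (Subgroup (G ⧸ K))) =
        (fun P => Subgroup.map (QuotientGroup.mk' K) P) ''
          (C.carrier : Set (Subgroup G)) ∧
      C.len = D.len := by
  intro D
  obtain ⟨T, hT, le_T⟩ := Finset.exists_greatest_of_isChain D.isChain ⟨⊥, D.bot_mem⟩
  have hcop : (Nat.card (QuotientGroup.mk' K).ker).Coprime (Nat.card T) := by
    rw [QuotientGroup.ker_mk']
    exact hK.coprime_of_compl (D.pi T hT)
  obtain ⟨H, hH, rfl⟩ := Subgroup.exists_disjoint_ker_map_eq_of_coprime _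
    (le_top.trans_eq (QuotientGroup.range_mk' K).symm) hcop
  exact PiChain.exists_map_eq _ D hH le_T

/-- The reduction map on chains of π-subgroups, C ↦ C̄ (memberwise P ↦ PK/K),
is surjective onto the chains of π-subgroups of G/K. -/
theorem chain_reduction_surjective (π : Set ℕ) (hπ : ∀ p ∈ π, p.Prime)
    (G : Type*) [Group G] [Finite G] (K : Subgroup G) [K.Normal]
    (hK : IsPiSubgroup πᶜ K) :
    ∀ D : PiChain π (G ⧸ K), ∃ C : PiChain π G,
      (D.carrier : Set (Subgroup (G ⧸ K))) =
        (fun P => Subgroup.map (QuotientGroup.mk' K) P) ''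
          (C.carrier : Set (Subgroup G)) ∧
      C.len = D.len :=
  chain_reduction_surjective_general π G K hK
end

section
/- Let G be a finite group, K a normal π'-subgroup of G, and P₁ < P₂ two π-subgroups of G. Then N_G(P₁)K ∩ N_G(P₂)K = (N_G(P₁) ∩ N_G(P₂))K. -/
theorem IsPiSubgroup.disjoint_of_compl {π : Set ℕ} {G : Type*} [Group G] {K P : Subgroup G}
    (hK : IsPiSubgroup πᶜ K) (hP : IsPiSubgroup π P) : Disjoint K P :=
  Subgroup.disjoint_of_coprime_natCard (hK.coprime_of_compl hP)

namespace Subgroup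

open scoped Pointwise

variable {G : Type*} [Group G]

theorem inf_sup_normal_of_le {A : Subgroup G} (B : Subgroup G) {K : Subgroup G} [K.Normal]
    (h : K ≤ A) : A ⊓ (B ⊔ K) = (A ⊓ B) ⊔ K :=
  SetLike.coe_injective <| by
    rw [coe_inf, mul_normal, mul_normal, inf_mul_assoc A B K h]

theorem sup_normal_inf_eq_of_le_of_disjoint {P Q K : Subgroup G} [K.Normal] (hPQ : P ≤ Q)
    (hKQ : Disjoint K Q) : (P ⊔ K) ⊓ Q = P :=
  SetLike.coe_injective <| by
    rw [coe_inf, mul_normal, ← mul_inf_assoc P K Q hPQ, hKQ.eq_bot, coe_bot, Set.singleton_one,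
      mul_one]

theorem normalizer_sup_normal_inf_normalizer_le {P Q K : Subgroup G} [K.Normal] (hPQ : P ≤ Q)
    (hKQ : Disjoint K Q) : (normalizer P ⊔ K) ⊓ normalizer Q ≤ normalizer P := by
  have hsup : normalizer P ⊔ K ≤ normalizer ((P ⊔ K : Subgroup G) : Set G) :=
    sup_le normalizer_le_normalizer_sup_normal (le_sup_right.trans le_normalizer)
  calc (normalizer P ⊔ K) ⊓ normalizer Q
      ≤ normalizer ((P ⊔ K : Subgroup G) : Set G) ⊓ normalizer Q := inf_le_inf_right _ hsup
    _ ≤ normalizer (((P ⊔ K) ⊓ Q : Subgroup G) : Set G) := inf_normalizer_le_normalizer_inf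
    _ = normalizer P := by rw [sup_normal_inf_eq_of_le_of_disjoint hPQ hKQ]

theorem normalizer_sup_normal_inf_eq {P Q K : Subgroup G} [K.Normal] (hPQ : P ≤ Q)
    (hKQ : Disjoint K Q) :
    (normalizer P ⊔ K) ⊓ (normalizer Q ⊔ K) = (normalizer P ⊓ normalizer Q) ⊔ K := by
  refine le_antisymm ?_ (le_inf (sup_le_sup_right inf_le_left K)
    (sup_le_sup_right inf_le_right K))
  rw [inf_sup_normal_of_le _ le_sup_right]
  exact sup_le_sup_right (le_inf (normalizer_sup_normal_inf_normalizer_le hPQ hKQ) inf_le_right) K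

end Subgroup

theorem normalizer_sup_inf_general (π : Set ℕ)
    (G : Type*) [Group G] (K P₁ P₂ : Subgroup G) [K.Normal]
    (hK : IsPiSubgroup πᶜ K) (h2 : IsPiSubgroup π P₂)
    (hlt : P₁ < P₂) :
    (Subgroup.normalizer P₁ ⊔ K) ⊓ (Subgroup.normalizer P₂ ⊔ K) =
      (Subgroup.normalizer P₁ ⊓ Subgroup.normalizer P₂) ⊔ K :=
  Subgroup.normalizer_sup_normal_inf_eq hlt.le (hK.disjoint_of_compl h2)

/-- If K ⊴ G is a π'-subgroup and P₁ < P₂ are π-subgroups of G, then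
N_G(P₁)K ∩ N_G(P₂)K = (N_G(P₁) ∩ N_G(P₂))K. -/
theorem normalizer_sup_inf (π : Set ℕ) (hπ : ∀ p ∈ π, p.Prime)
    (G : Type*) [Group G] [Finite G] (K P₁ P₂ : Subgroup G) [K.Normal]
    (hK : IsPiSubgroup πᶜ K) (h1 : IsPiSubgroup π P₁) (h2 : IsPiSubgroup π P₂)
    (hlt : P₁ < P₂) :
    (Subgroup.normalizer P₁ ⊔ K) ⊓ (Subgroup.normalizer P₂ ⊔ K) =
      (Subgroup.normalizer P₁ ⊓ Subgroup.normalizer P₂) ⊔ K :=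
  normalizer_sup_inf_general π G K P₁ P₂ hK h2 hlt
end
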